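/- If a sequence of requests r is partitioned into k-phases (maximal consecutive blocks each containing requests to at most k distinct items), and k' ≥ k + 2m where m is the average number of new requests per k-phase (a new request in a phase is one to an item not requested in that phase or the previous phase), then the number of k'-phases is at most (3/4) times the number of k-phases (both counts excluding the first phase). -/

import Mathlib

/-- Length of the maximal prefix of `r` containing at most `k` distinct items. -/
def maxPrefixLen {α : Type*} [DecidableEq α] (k : ℕ) (r : List α) : ℕ :=
  ((List.range (r.length + 1)).filter (fun n => (r.take n).dedup.length ≤ k)).foldr max 0

/-- Greedy phase partition, with fuel for termination. -/
def phasesAux {α : Type*} [DecidableEq α] (k : ℕ) : ℕ → List α → List (List α)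
  | 0, _ => []
  | _, [] => []
  | (fuel+1), r =>
      let n := max 1 (maxPrefixLen k r)
      r.take n :: phasesAux k fuel (r.drop n)

/-- The `k`-phase partition of `r`: greedy maximal consecutive blocks, each
containing requests to at most `k` distinct items. -/
def phases {α : Type*} [DecidableEq α] (k : ℕ) (r : List α) : List (List α) :=
  phasesAux k r.length r

/-- `L(k,r)`: the number of `k`-phases of `r`, minus 1. -/
def numPhases {α : Type*} [DecidableEq α] (k : ℕ) (r : List α) : ℕ :=
  (phases k r).length - 1

/-- For each `k`-phase other than the first, the number of new requests:
items requested in the phase but not in the previous phase. -/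
def newCounts {α : Type*} [DecidableEq α] (k : ℕ) (r : List α) : List ℕ :=
  ((phases k r).zip (phases k r).tail).map
    (fun p => (p.2.dedup.filter (fun x => x ∉ p.1)).length)

/-- `m(k,r)`: the average number of new requests per `k`-phase (other than the first). -/
noncomputable def avgNew {α : Type*} [DecidableEq α] (k : ℕ) (r : List α) : ℝ :=
  ((newCounts k r).sum : ℝ) / (numPhases k r : ℝ)

/-- Index in `r` at which the `i`-th `k`-phase starts. -/
def phaseStart {α : Type*} [DecidableEq α] (k : ℕ) (r : List α) (i : ℕ) : ℕ :=
  (((phases k r).take i).map List.length).sum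


/-!
Write `L = L(k,r)`, `L' = L(k',r)` and let `ψ j` be the index of the `k`-phase in which the `j`-th
`k'`-phase starts. The `j`-th `k'`-phase together with the request following it involves more
than `k' ≥ k` items, so it does not fit into one `k`-phase and `ψ` is strictly increasing. At a
unit step `ψ (j+1) = ψ j + 1` this window fits into the `k`-phases `ψ j` and `ψ j + 1`, which
together involve at most `k` items plus the new requests of phase `ψ j + 1`. So each unit step
charges more than `k' - k` new requests to its own `k`-phase, while there are only
`m L ≤ (k' - k) L / 2` new requests in all: at most `L / 2` steps are unit steps. All other steps
advance `ψ` by at least two, whence `2 L' ≤ L + L / 2`.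
-/

open Finset

theorem List.foldr_max_zero_mem {l : List ℕ} (hl : l ≠ []) : l.foldr max 0 ∈ l :=
  List.maximum_mem (List.foldr_max_of_ne_nil hl).symm

theorem List.sum_eq_sum_range_getD {M : Type*} [AddCommMonoid M] (l : List M) :
    l.sum = ∑ i ∈ Finset.range l.length, l.getD i 0 := by
  rw [Finset.sum_range, ← Fin.sum_univ_getElem]
  simp

section MaxPrefix

variable {α : Type*} [DecidableEq α]

theorem maxPrefixLen_mem (k : ℕ) (r : List α) :
    maxPrefixLen k r ∈
      (List.range (r.length + 1)).filter (fun n => (r.take n).dedup.length ≤ k) :=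
  List.foldr_max_zero_mem (List.ne_nil_of_mem (a := 0) (by simp))

theorem card_take_maxPrefixLen_le (k : ℕ) (r : List α) :
    #(r.take (maxPrefixLen k r)).toFinset ≤ k := by
  have h := maxPrefixLen_mem k r
  simp only [List.mem_filter, decide_eq_true_eq] at h
  simpa [List.card_toFinset] using h.2

theorem le_maxPrefixLen {k n : ℕ} {r : List α} (hn : n ≤ r.length) (h : #(r.take n).toFinset ≤ k) :
    n ≤ maxPrefixLen k r :=
  List.le_max_of_le (by simpa [List.card_toFinset, Nat.lt_succ_iff] using And.intro hn h) le_rfl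

theorem lt_card_take_maxPrefixLen_succ {k : ℕ} {r : List α} (h : maxPrefixLen k r < r.length) :
    k < #(r.take (maxPrefixLen k r + 1)).toFinset := by
  by_contra! hle
  have := le_maxPrefixLen h hle
  omega

theorem max_one_maxPrefixLen {k : ℕ} {r : List α} (hk : 0 < k) (hr : r ≠ []) :
    max 1 (maxPrefixLen k r) = maxPrefixLen k r := by
  refine max_eq_right (le_maxPrefixLen (List.length_pos_iff.mpr hr) ?_)
  obtain ⟨a, t, rfl⟩ := List.exists_cons_of_ne_nil hr
  simpa using Nat.succ_le_of_lt hk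

end MaxPrefix

section PhasesAux

variable {α : Type*} [DecidableEq α] {k : ℕ}

theorem phasesAux_nil (fuel : ℕ) : phasesAux k fuel ([] : List α) = [] := by
  cases fuel <;> rfl

theorem phasesAux_succ (fuel : ℕ) {r : List α} (hr : r ≠ []) :
    phasesAux k (fuel + 1) r = r.take (max 1 (maxPrefixLen k r)) ::
      phasesAux k fuel (r.drop (max 1 (maxPrefixLen k r))) := by
  obtain ⟨a, t, rfl⟩ := List.exists_cons_of_ne_nil hr
  rfl

theorem flatten_phasesAux : ∀ {fuel : ℕ} {r : List α}, r.length ≤ fuel →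
    (phasesAux k fuel r).flatten = r
  | 0, r, h => by simp [List.length_eq_zero_iff.mp (Nat.le_zero.mp h), phasesAux_nil]
  | fuel + 1, r, h => by
    rcases eq_or_ne r [] with rfl | hr
    · simp [phasesAux_nil]
    rw [phasesAux_succ fuel hr, List.flatten_cons, flatten_phasesAux, List.take_append_drop]
    simp only [List.length_drop]
    omega

theorem ne_nil_of_mem_phasesAux : ∀ {fuel : ℕ} {r p : List α},
    p ∈ phasesAux k fuel r → p ≠ []
  | 0, _, _, h => by simp [phasesAux] at h
  | fuel + 1, r, p, h => by
    rcases eq_or_ne r [] with rfl | hr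
    · simp [phasesAux_nil] at h
    rw [phasesAux_succ fuel hr, List.mem_cons] at h
    rcases h with rfl | h
    · simpa using hr
    · exact ne_nil_of_mem_phasesAux h

theorem card_toFinset_le_of_mem_phasesAux (hk : 0 < k) : ∀ {fuel : ℕ} {r p : List α},
    p ∈ phasesAux k fuel r → #p.toFinset ≤ k
  | 0, _, _, h => by simp [phasesAux] at h
  | fuel + 1, r, p, h => by
    rcases eq_or_ne r [] with rfl | hr
    · simp [phasesAux_nil] at h
    rw [phasesAux_succ fuel hr, List.mem_cons] at h
    rcases h with rfl | h
    · rw [max_one_maxPrefixLen hk hr]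
      exact card_take_maxPrefixLen_le k r
    · exact card_toFinset_le_of_mem_phasesAux hk h

theorem take_one_of_mem_head?_phasesAux {fuel : ℕ} {r q : List α}
    (h : q ∈ (phasesAux k fuel r).head?) : r ≠ [] ∧ q.take 1 = r.take 1 := by
  rcases eq_or_ne r [] with rfl | hr
  · simp [phasesAux_nil] at h
  obtain ⟨fuel, rfl⟩ : ∃ f, fuel = f + 1 := by
    cases fuel
    · simp [phasesAux] at h
    · exact ⟨_, rfl⟩
  rw [phasesAux_succ fuel hr, List.head?_cons, Option.mem_some_iff] at h
  subst h
  rw [List.take_take, min_eq_left (le_max_left _ _)]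
  exact ⟨hr, rfl⟩

theorem isChain_phasesAux (hk : 0 < k) : ∀ {fuel : ℕ} {r : List α},
    (phasesAux k fuel r).IsChain (fun p q => k < #(p ++ q.take 1).toFinset)
  | 0, _ => by simp [phasesAux]
  | fuel + 1, r => by
    rcases eq_or_ne r [] with rfl | hr
    · simp [phasesAux_nil]
    rw [phasesAux_succ fuel hr]
    refine List.IsChain.cons (isChain_phasesAux hk) fun q hq => ?_
    obtain ⟨hne, hq⟩ := take_one_of_mem_head?_phasesAux hq
    rw [hq, ← List.take_add, max_one_maxPrefixLen hk hr]
    rw [max_one_maxPrefixLen hk hr, Ne, List.drop_eq_nil_iff, not_le] at hne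
    exact lt_card_take_maxPrefixLen_succ hne

end PhasesAux

section Phases

variable {α : Type*} [DecidableEq α] (k : ℕ) (r : List α) {i : ℕ}

theorem flatten_phases : (phases k r).flatten = r :=
  flatten_phasesAux le_rfl

theorem ne_nil_of_mem_phases {p : List α} (hp : p ∈ phases k r) : p ≠ [] :=
  ne_nil_of_mem_phasesAux hp

theorem card_toFinset_le_of_mem_phases (hk : 0 < k) {p : List α} (hp : p ∈ phases k r) :
    #p.toFinset ≤ k :=
  card_toFinset_le_of_mem_phasesAux hk hp

theorem isChain_phases (hk : 0 < k) :
    (phases k r).IsChain (fun p q => k < #(p ++ q.take 1).toFinset) :=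
  isChain_phasesAux hk

theorem phaseStart_eq_sum_take (i : ℕ) :
    phaseStart k r i = (((phases k r).map List.length).take i).sum := by
  rw [phaseStart, List.map_take]

theorem phaseStart_zero : phaseStart k r 0 = 0 := by
  simp [phaseStart]

theorem monotone_phaseStart : Monotone (phaseStart k r) := by
  intro i j hij
  simp only [phaseStart_eq_sum_take]
  exact List.monotone_sum_take _ hij

theorem phaseStart_of_length_le (h : (phases k r).length ≤ i) : phaseStart k r i = r.length := by
  rw [phaseStart, List.take_of_length_le h, ← List.length_flatten, flatten_phases]

theorem drop_phaseStart (i : ℕ) : r.drop (phaseStart k r i) = ((phases k r).drop i).flatten := by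
  have h := List.drop_sum_flatten (phases k r) i
  rwa [flatten_phases, ← phaseStart_eq_sum_take] at h

theorem phaseStart_lt_length (h : i < (phases k r).length) : phaseStart k r i < r.length := by
  have hne : r.drop (phaseStart k r i) ≠ [] := by
    rw [drop_phaseStart, List.drop_eq_getElem_cons h, List.flatten_cons]
    exact List.append_ne_nil_of_left_ne_nil (ne_nil_of_mem_phases k r (List.getElem_mem h)) _
  simpa [List.drop_eq_nil_iff] using hne

theorem length_newCounts : (newCounts k r).length = numPhases k r := by
  simp [newCounts, numPhases]

theorem sum_newCounts :
    (newCounts k r).sum = ∑ i ∈ range (numPhases k r), (newCounts k r).getD i 0 := by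
  rw [List.sum_eq_sum_range_getD, length_newCounts]

theorem newCounts_getD (h : i + 1 < (phases k r).length) :
    (newCounts k r).getD i 0 =
      #(((phases k r)[i + 1]).toFinset \ ((phases k r)[i]).toFinset) := by
  have hi : i < ((phases k r).zip (phases k r).tail).length := by simp; omega
  simp only [newCounts, List.getD_eq_getElem?_getD, List.getElem?_map, List.getElem?_eq_getElem hi,
    Option.map_some, Option.getD_some, List.getElem_zip, List.getElem_tail]
  rw [← List.toFinset_card_of_nodup ((List.nodup_dedup _).filter _), List.toFinset_filter]
  congr 1
  ext x
  simp

end Phases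

section Windows

variable {α : Type*} [DecidableEq α]

def itemsIn (r : List α) (x y : ℕ) : Finset α := ((r.take y).drop x).toFinset

variable {r : List α} {x y z x' y' : ℕ}

theorem mem_itemsIn {a : α} : a ∈ itemsIn r x y ↔ ∃ i, x ≤ i ∧ i < y ∧ r[i]? = some a := by
  simp only [itemsIn, List.mem_toFinset, List.mem_iff_getElem?, List.getElem?_drop,
    List.getElem?_take]
  constructor
  · rintro ⟨i, hi⟩
    split_ifs at hi with h
    exact ⟨x + i, by omega, h, hi⟩
  · rintro ⟨i, hxi, hiy, hi⟩
    exact ⟨i - x, by rwa [if_pos (by omega), Nat.add_sub_cancel' hxi]⟩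

theorem itemsIn_mono (hx : x' ≤ x) (hy : y ≤ y') : itemsIn r x y ⊆ itemsIn r x' y' := by
  intro a
  simp only [mem_itemsIn]
  rintro ⟨i, hxi, hiy, hi⟩
  exact ⟨i, by omega, by omega, hi⟩

theorem itemsIn_union (hxy : x ≤ y) (hyz : y ≤ z) :
    itemsIn r x y ∪ itemsIn r y z = itemsIn r x z := by
  ext a
  simp only [Finset.mem_union, mem_itemsIn]
  constructor
  · rintro (⟨i, hxi, hiy, hi⟩ | ⟨i, hyi, hiz, hi⟩)
    · exact ⟨i, hxi, by omega, hi⟩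
    · exact ⟨i, by omega, hiz, hi⟩
  · rintro ⟨i, hxi, hiz, hi⟩
    rcases lt_or_ge i y with hiy | hyi
    · exact Or.inl ⟨i, hxi, hiy, hi⟩
    · exact Or.inr ⟨i, hyi, hiz, hi⟩

end Windows

section PhaseWindows

variable {α : Type*} [DecidableEq α] {k : ℕ} {r : List α} {i : ℕ}

theorem itemsIn_phase (h : i < (phases k r).length) :
    itemsIn r (phaseStart k r i) (phaseStart k r (i + 1)) = ((phases k r)[i]).toFinset := by
  have := List.drop_take_succ_flatten_eq_getElem (phases k r) i h
  rw [flatten_phases, ← phaseStart_eq_sum_take, ← phaseStart_eq_sum_take] at this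
  rw [itemsIn, this]

theorem itemsIn_phaseStart_succ (h : i < (phases k r).length) :
    itemsIn r (phaseStart k r i) (phaseStart k r i + 1) = ((phases k r)[i].take 1).toFinset := by
  rw [itemsIn, List.drop_take, Nat.add_sub_cancel_left, drop_phaseStart,
    List.drop_eq_getElem_cons h, List.flatten_cons, List.take_append_of_le_length]
  exact List.length_pos_iff.mpr (ne_nil_of_mem_phases k r (List.getElem_mem h))

theorem card_itemsIn_phase_le (hk : 0 < k) (h : i < (phases k r).length) :
    #(itemsIn r (phaseStart k r i) (phaseStart k r (i + 1))) ≤ k := by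
  rw [itemsIn_phase h]
  exact card_toFinset_le_of_mem_phases k r hk (List.getElem_mem h)

theorem lt_card_itemsIn_phase_succ (hk : 0 < k) (h : i + 1 < (phases k r).length) :
    k < #(itemsIn r (phaseStart k r i) (phaseStart k r (i + 1) + 1)) := by
  rw [← itemsIn_union (monotone_phaseStart k r i.le_succ) (Nat.le_succ _),
    itemsIn_phase (Nat.lt_of_succ_lt h), itemsIn_phaseStart_succ h, ← List.toFinset_append]
  exact List.isChain_iff_getElem.mp (isChain_phases k r hk) i h

theorem card_itemsIn_two_phases_le (hk : 0 < k) (h : i + 1 < (phases k r).length) :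
    #(itemsIn r (phaseStart k r i) (phaseStart k r (i + 2))) ≤ k + (newCounts k r).getD i 0 := by
  rw [← itemsIn_union (monotone_phaseStart k r i.le_succ) (monotone_phaseStart k r (i + 1).le_succ),
    itemsIn_phase (Nat.lt_of_succ_lt h), itemsIn_phase h, newCounts_getD k r h, Finset.union_comm,
    ← Finset.card_sdiff_add_card, add_comm]
  exact Nat.add_le_add_right (card_toFinset_le_of_mem_phases k r hk (List.getElem_mem _)) _

end PhaseWindows

section UnitSteps

def unitSteps (ψ : ℕ → ℕ) (n : ℕ) : Finset ℕ := {j ∈ range n | ψ (j + 1) = ψ j + 1}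

variable {ψ : ℕ → ℕ} {n : ℕ}

theorem card_unitSteps_succ (ψ : ℕ → ℕ) (n : ℕ) :
    #(unitSteps ψ (n + 1)) = #(unitSteps ψ n) + if ψ (n + 1) = ψ n + 1 then 1 else 0 := by
  rw [unitSteps, unitSteps, range_add_one, filter_insert]
  split_ifs
  · exact card_insert_of_notMem (by simp)
  · rfl

theorem two_mul_add_le_card_unitSteps_add (h : ∀ j < n, ψ j < ψ (j + 1)) :
    2 * n + ψ 0 ≤ #(unitSteps ψ n) + ψ n := by
  induction n with
  | zero => simp
  | succ n ih =>
    have := ih fun j hj => h j (by omega)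
    have := h n (by omega)
    rw [card_unitSteps_succ]
    split_ifs <;> omega

theorem card_unitSteps_mul_le_sum_range {g : ℕ → ℕ} {c : ℕ} (hmono : ∀ j < n, ψ j ≤ ψ (j + 1))
    (hg : ∀ j < n, ψ (j + 1) = ψ j + 1 → c ≤ g (ψ j)) :
    #(unitSteps ψ n) * c ≤ ∑ i ∈ range (ψ n), g i := by
  induction n with
  | zero => simp [unitSteps]
  | succ n ih =>
    rw [card_unitSteps_succ, ← sum_range_add_sum_Ico g (hmono n n.lt_succ_self), add_mul]
    refine Nat.add_le_add (ih (fun j hj => hmono j (by omega)) fun j hj => hg j (by omega)) ?_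
    split_ifs with hn
    · simpa [hn] using hg n n.lt_succ_self hn
    · simp

end UnitSteps

section PhaseIndex

variable {α : Type*} [DecidableEq α]

def phaseIndex (k : ℕ) (r : List α) (p : ℕ) : ℕ :=
  Nat.findGreatest (fun i => phaseStart k r i ≤ p) (numPhases k r)

theorem phaseIndex_le_numPhases (k : ℕ) (r : List α) (p : ℕ) : phaseIndex k r p ≤ numPhases k r :=
  Nat.findGreatest_le _

theorem phaseStart_phaseIndex_le (k : ℕ) (r : List α) (p : ℕ) :
    phaseStart k r (phaseIndex k r p) ≤ p :=
  Nat.findGreatest_spec (P := fun i => phaseStart k r i ≤ p) (Nat.zero_le _)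
    (by rw [phaseStart_zero]; exact Nat.zero_le p)

theorem lt_phaseStart_phaseIndex_succ (k : ℕ) {r : List α} {p : ℕ} (hp : p < r.length) :
    p < phaseStart k r (phaseIndex k r p + 1) := by
  by_contra! hle
  rcases le_or_gt (phaseIndex k r p + 1) (numPhases k r) with hN | hN
  · have : phaseIndex k r p + 1 ≤ phaseIndex k r p := Nat.le_findGreatest hN hle
    omega
  · rw [phaseStart_of_length_le k r (by unfold numPhases at hN; omega)] at hle
    omega

theorem phaseIndex_lt_length (k : ℕ) {r : List α} {p : ℕ} (hp : p < r.length) :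
    phaseIndex k r p < (phases k r).length := by
  by_contra! hle
  have := phaseStart_phaseIndex_le k r p
  rw [phaseStart_of_length_le k r hle] at this
  omega

variable {k k' : ℕ} {r : List α} {j : ℕ}

/-- The `j`-th `k'`-phase together with the request following it has more than `k'` items and
lies inside the `k`-phases from the one where it starts to the one where the next `k'`-phase
starts. -/
theorem lt_card_itemsIn_phaseIndex (hk' : 0 < k') (hj : j + 1 < (phases k' r).length) :
    k' < #(itemsIn r (phaseStart k r (phaseIndex k r (phaseStart k' r j)))
      (phaseStart k r (phaseIndex k r (phaseStart k' r (j + 1)) + 1))) :=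
  (lt_card_itemsIn_phase_succ hk' hj).trans_le <| card_le_card <|
    itemsIn_mono (phaseStart_phaseIndex_le k r _)
      (lt_phaseStart_phaseIndex_succ k (phaseStart_lt_length k' r hj))

theorem phaseIndex_lt_phaseIndex_succ (hk : 0 < k) (hkk' : k ≤ k')
    (hj : j + 1 < (phases k' r).length) :
    phaseIndex k r (phaseStart k' r j) < phaseIndex k r (phaseStart k' r (j + 1)) := by
  by_contra! hle
  have hi := phaseIndex_lt_length k (phaseStart_lt_length k' r (j.lt_succ_self.trans hj))
  have hwindow := (lt_card_itemsIn_phaseIndex (k := k) (hk.trans_le hkk') hj).trans_le <|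
    card_le_card (itemsIn_mono le_rfl (monotone_phaseStart k r (Nat.add_le_add_right hle 1)))
  have := hwindow.trans_le (card_itemsIn_phase_le hk hi)
  omega

theorem lt_add_newCounts_of_phaseIndex_succ_eq (hk : 0 < k) (hk' : 0 < k')
    (hj : j + 1 < (phases k' r).length)
    (h : phaseIndex k r (phaseStart k' r (j + 1)) = phaseIndex k r (phaseStart k' r j) + 1) :
    k' < k + (newCounts k r).getD (phaseIndex k r (phaseStart k' r j)) 0 := by
  have hwindow := lt_card_itemsIn_phaseIndex (k := k) hk' hj
  rw [h] at hwindow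
  refine hwindow.trans_le (card_itemsIn_two_phases_le hk ?_)
  rw [← h]
  exact phaseIndex_lt_length k (phaseStart_lt_length k' r hj)

end PhaseIndex

theorem le_and_two_mul_sum_newCounts_le {α : Type*} [DecidableEq α] {r : List α} {k k' : ℕ}
    (h : (k : ℝ) + 2 * avgNew k r ≤ k') :
    k ≤ k' ∧ 2 * (newCounts k r).sum ≤ (k' - k) * numPhases k r := by
  have havg : 0 ≤ avgNew k r := div_nonneg (Nat.cast_nonneg _) (Nat.cast_nonneg _)
  have hkk' : k ≤ k' := by exact_mod_cast (show (k : ℝ) ≤ k' by linarith)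
  refine ⟨hkk', ?_⟩
  rcases Nat.eq_zero_or_pos (numPhases k r) with hL | hL
  · simp [List.length_eq_zero_iff.mp ((length_newCounts k r).trans hL)]
  · have hL' : (0 : ℝ) < numPhases k r := by exact_mod_cast hL
    have : 2 * ((newCounts k r).sum : ℝ) / numPhases k r ≤ k' - k := by
      rw [avgNew, mul_div_assoc'] at h
      linarith
    rw [div_le_iff₀ hL', ← Nat.cast_sub hkk'] at this
    exact_mod_cast this

/-- if `k' ≥ k + 2·m(k,r)` then the number of `k'`-phases (minus 1)
is at most `3/4` times the number of `k`-phases (minus 1). -/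
theorem phase_count_drop {α : Type*} [DecidableEq α] (r : List α) (k k' : ℕ)
    (hk : 0 < k) (hk' : (k : ℝ) + 2 * avgNew k r ≤ (k' : ℝ)) :
    (numPhases k' r : ℝ) ≤ (3 / 4) * (numPhases k r : ℝ) := by
  obtain ⟨hkk', hsum⟩ := le_and_two_mul_sum_newCounts_le hk'
  set ψ := fun j => phaseIndex k r (phaseStart k' r j)
  have hL' : ∀ {j}, j < numPhases k' r → j + 1 < (phases k' r).length := by
    unfold numPhases; omega
  have hstep : ∀ j < numPhases k' r, ψ j < ψ (j + 1) :=
    fun j hj => phaseIndex_lt_phaseIndex_succ hk hkk' (hL' hj)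
  have hcount := two_mul_add_le_card_unitSteps_add hstep
  have hcharge := card_unitSteps_mul_le_sum_range (c := k' - k + 1)
    (g := fun i => (newCounts k r).getD i 0) (fun j hj => (hstep j hj).le) fun j hj h => by
      have := lt_add_newCounts_of_phaseIndex_succ_eq hk (hk.trans_le hkk') (hL' hj) h
      simp only [ψ]
      omega
  have hψ : ψ (numPhases k' r) ≤ numPhases k r := phaseIndex_le_numPhases k r _
  have hnew :
      ∑ i ∈ range (ψ (numPhases k' r)), (newCounts k r).getD i 0 ≤ (newCounts k r).sum := by
    rw [sum_newCounts]
    exact sum_le_sum_of_subset (range_subset_range.mpr hψ)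
  have h2s : 2 * #(unitSteps ψ (numPhases k' r)) ≤ numPhases k r := by
    refine Nat.le_of_mul_le_mul_right ?_ (Nat.succ_pos (k' - k))
    nlinarith
  have : 4 * numPhases k' r ≤ 3 * numPhases k r := by omega
  have : (4 : ℝ) * numPhases k' r ≤ 3 * numPhases k r := by exact_mod_cast this
  linarith
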